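/- Certain answers for queries with negation: Let Q = (W, P⁺ AND ¬P₁ AND … AND ¬Pₙ) be a query with negation, and C a set of completeness statements. If C entails every negative crucial statement Compl(Pᵢ | P⁺) for i = 1,…,n, then for all graphs G, cert(Q, G, C) = ⟦Q⟧_G. -/

import Mathlib

namespace RDF

/-- Terms are variables or constants. -/
abbrev Term (V T : Type) := V ⊕ T
abbrev Triple (V T : Type) := Term V T × Term V T × Term V T
/-- A graph / basic graph pattern is a set of triples (patterns). -/
abbrev Graph (V T : Type) := Set (Triple V T)
abbrev BGP (V T : Type) := Set (Triple V T)
/-- A (partial) mapping from variables to terms. -/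
abbrev Mapping (V T : Type) := V → Option T

variable {V T : Type}

def applyTerm (μ : Mapping V T) : Term V T → Term V T
  | .inl v => (μ v).elim (.inl v) .inr
  | .inr t => .inr t

def applyTriple (μ : Mapping V T) (x : Triple V T) : Triple V T :=
  (applyTerm μ x.1, applyTerm μ x.2.1, applyTerm μ x.2.2)

/-- Instantiation μ(P) of a BGP. -/
def applyBGP (μ : Mapping V T) (P : BGP V T) : BGP V T :=
  applyTriple μ '' P

def dom (μ : Mapping V T) : Set V := {v | μ v ≠ none}

def varsTriple (x : Triple V T) : Set V :=
  {v | x.1 = .inl v ∨ x.2.1 = .inl v ∨ x.2.2 = .inl v}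

def vars (P : BGP V T) : Set V := ⋃ x ∈ P, varsTriple x

/-- ⟦P⟧_G = {μ | dom(μ) = var(P), μ(P) ⊆ G}. -/
def evalBGP (P : BGP V T) (G : Graph V T) : Set (Mapping V T) :=
  {μ | dom μ = vars P ∧ applyBGP μ P ⊆ G}

open Classical in
/-- Restriction μ|_W of a mapping to a set of variables. -/
noncomputable def restrictMap (W : Set V) (μ : Mapping V T) : Mapping V T :=
  fun v => if v ∈ W then μ v else none

/-- Evaluation of a positive query (W, P) with BGP P. -/
def evalPos (W : Set V) (P : BGP V T) (G : Graph V T) : Set (Mapping V T) :=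
  restrictMap W '' evalBGP P G

/-- A completeness statement Compl(pat | cond). -/
structure ComplStmt (V T : Type) where
  pat : BGP V T
  cond : BGP V T

/-- (G,G') ⊨ Compl(P1 | P2)  iff  ⋃{μ(P1) | μ(P1 ∪ P2) ⊆ G'} ⊆ G. -/
def sat (c : ComplStmt V T) (G G' : Graph V T) : Prop :=
  ∀ μ : Mapping V T, applyBGP μ (c.pat ∪ c.cond) ⊆ G' → applyBGP μ c.pat ⊆ G

def satSet (C : Set (ComplStmt V T)) (G G' : Graph V T) : Prop :=
  ∀ c ∈ C, sat c G G'

/-- Valid interpretations ext(G, C). -/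
def ext (G : Graph V T) (C : Set (ComplStmt V T)) : Set (Graph V T) :=
  {G' | G ⊆ G' ∧ satSet C G G'}

/-- Entailment C ⊨ c of a single completeness statement. -/
def entails (C : Set (ComplStmt V T)) (c : ComplStmt V T) : Prop :=
  ∀ G G' : Graph V T, G ⊆ G' → satSet C G G' → sat c G G'

/-- Entailment C ⊨ D of a set of completeness statements. -/
def entailsSet (C D : Set (ComplStmt V T)) : Prop :=
  ∀ G G' : Graph V T, G ⊆ G' → satSet C G G' → satSet D G G'

/-- Evaluation of the pattern P⁺ AND ¬P₁ AND … AND ¬Pₙ over G. -/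
def evalPattern (Pplus : BGP V T) (Ps : List (BGP V T)) (G : Graph V T) :
    Set (Mapping V T) :=
  {μ | μ ∈ evalBGP Pplus G ∧ ∀ Pi ∈ Ps, evalBGP (applyBGP μ Pi) G = ∅}

/-- Evaluation of a query with negation (W, P⁺ AND ¬P₁ … ¬Pₙ). -/
def evalQuery (W : Set V) (Pplus : BGP V T) (Ps : List (BGP V T)) (G : Graph V T) :
    Set (Mapping V T) :=
  restrictMap W '' evalPattern Pplus Ps G

/-- Certain answers w.r.t. completeness statements. -/
def cert {A : Type} (Q : Graph V T → Set A) (G : Graph V T)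
    (C : Set (ComplStmt V T)) : Set A :=
  ⋂ G' ∈ ext G C, Q G'

/-- Possible answers w.r.t. completeness statements. -/
def poss {A : Type} (Q : Graph V T → Set A) (G : Graph V T)
    (C : Set (ComplStmt V T)) : Set A :=
  ⋃ G' ∈ ext G C, Q G'

/-- `compMap ν ρ` instantiates with `ν` first and then with `ρ` on the variables `ν` leaves free. -/
def compMap (ν ρ : Mapping V T) : Mapping V T := fun v => (ν v).elim (ρ v) some

lemma applyTerm_compMap (ν ρ : Mapping V T) (x : Term V T) :
    applyTerm ρ (applyTerm ν x) = applyTerm (compMap ν ρ) x := by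
  cases x with
  | inl v => cases h : ν v <;> simp [applyTerm, compMap, h]
  | inr t => rfl

lemma applyBGP_compMap (ν ρ : Mapping V T) (P : BGP V T) :
    applyBGP ρ (applyBGP ν P) = applyBGP (compMap ν ρ) P := by
  simp only [applyBGP, Set.image_image]
  exact Set.image_congr fun x _ => by simp [applyTriple, applyTerm_compMap]

lemma applyTerm_compMap_of_mem_dom (ν ρ : Mapping V T) {x : Term V T}
    (hx : ∀ v, x = .inl v → v ∈ dom ν) : applyTerm (compMap ν ρ) x = applyTerm ν x := by
  cases x with
  | inl v =>
    obtain ⟨t, ht⟩ := Option.ne_none_iff_exists'.1 (hx v rfl)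
    simp [applyTerm, compMap, ht]
  | inr t => rfl

lemma applyBGP_compMap_of_vars_subset_dom (ν ρ : Mapping V T) {P : BGP V T}
    (hP : vars P ⊆ dom ν) : applyBGP (compMap ν ρ) P = applyBGP ν P := by
  refine Set.image_congr fun x hx => ?_
  have hx : varsTriple x ⊆ dom ν := (Set.subset_biUnion_of_mem hx).trans hP
  obtain ⟨a, b, c⟩ := x
  simp only [applyTriple, Prod.mk.injEq]
  refine ⟨?_, ?_, ?_⟩ <;>
    exact applyTerm_compMap_of_mem_dom ν ρ fun v hv => hx (by simp [varsTriple, hv])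

lemma sat_self (c : ComplStmt V T) (G : Graph V T) : sat c G G :=
  fun _ hμ => (Set.image_mono Set.subset_union_left).trans hμ

lemma self_mem_ext (G : Graph V T) (C : Set (ComplStmt V T)) : G ∈ ext G C :=
  ⟨le_rfl, fun c _ => sat_self c G⟩

lemma cert_subset {A : Type} (Q : Graph V T → Set A) (G : Graph V T)
    (C : Set (ComplStmt V T)) : cert Q G C ⊆ Q G :=
  Set.biInter_subset_of_mem (self_mem_ext G C)

lemma evalBGP_mono (P : BGP V T) {G G' : Graph V T} (hG : G ⊆ G') :
    evalBGP P G ⊆ evalBGP P G' :=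
  fun _ ⟨hdom, hsub⟩ => ⟨hdom, hsub.trans hG⟩

/-- Completeness of `Pi` given `P` transfers every match of `ν(Pi)` in `G'` back to `G`:
extending it by a match `ν` of `P` in `G'` gives a match of `Pi ∪ P` in `G'`. -/
lemma evalBGP_applyBGP_subset_of_sat {P Pi : BGP V T} {G G' : Graph V T} {ν : Mapping V T}
    (hc : sat ⟨Pi, P⟩ G G') (hν : ν ∈ evalBGP P G') :
    evalBGP (applyBGP ν Pi) G' ⊆ evalBGP (applyBGP ν Pi) G := by
  rintro ρ ⟨hρdom, hρsub⟩
  rw [applyBGP_compMap] at hρsub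
  refine ⟨hρdom, ?_⟩
  have hP : applyBGP (compMap ν ρ) P ⊆ G' := by
    rw [applyBGP_compMap_of_vars_subset_dom ν ρ hν.1.ge]
    exact hν.2
  have hmatch : applyBGP (compMap ν ρ) (Pi ∪ P) ⊆ G' := by
    rw [applyBGP, Set.image_union]
    exact Set.union_subset hρsub hP
  rw [applyBGP_compMap]
  exact hc _ hmatch

lemma evalPattern_mono_of_sat {Pplus : BGP V T} {Ps : List (BGP V T)} {G G' : Graph V T}
    (hG : G ⊆ G') (hsat : ∀ Pi ∈ Ps, sat ⟨Pi, Pplus⟩ G G') :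
    evalPattern Pplus Ps G ⊆ evalPattern Pplus Ps G' := by
  rintro ν ⟨hpos, hneg⟩
  have hpos' := evalBGP_mono Pplus hG hpos
  refine ⟨hpos', fun Pi hPi => Set.subset_empty_iff.1 ?_⟩
  exact (hneg Pi hPi).subst (evalBGP_applyBGP_subset_of_sat (hsat Pi hPi) hpos')

lemma evalQuery_mono_of_sat (W : Set V) {Pplus : BGP V T} {Ps : List (BGP V T)}
    {G G' : Graph V T} (hG : G ⊆ G') (hsat : ∀ Pi ∈ Ps, sat ⟨Pi, Pplus⟩ G G') :
    evalQuery W Pplus Ps G ⊆ evalQuery W Pplus Ps G' :=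
  Set.image_mono (evalPattern_mono_of_sat hG hsat)

theorem cert_queries_with_negation_general {V T : Type} (W : Set V)
    (Pplus : BGP V T) (Ps : List (BGP V T))
    (C : Set (ComplStmt V T))
    (h : ∀ Pi ∈ Ps, entails C ⟨Pi, Pplus⟩) :
    ∀ G : Graph V T,
      cert (evalQuery W Pplus Ps) G C = evalQuery W Pplus Ps G := by
  intro G
  refine (cert_subset _ G C).antisymm (Set.subset_iInter₂ fun G' hG' => ?_)
  obtain ⟨hGG', hsat⟩ := hG'
  exact evalQuery_mono_of_sat W hGG' fun Pi hPi => h Pi hPi G G' hGG' hsat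

/-- certain answers for queries with negation:
    if C entails every negative crucial statement Compl(Pᵢ | P⁺),
    then cert(Q, G, C) = ⟦Q⟧_G. -/
theorem cert_queries_with_negation {V T : Type} (W : Set V)
    (Pplus : BGP V T) (Ps : List (BGP V T)) (hW : W ⊆ vars Pplus)
    (C : Set (ComplStmt V T))
    (h : ∀ Pi ∈ Ps, entails C ⟨Pi, Pplus⟩) :
    ∀ G : Graph V T,
      cert (evalQuery W Pplus Ps) G C = evalQuery W Pplus Ps G :=
  cert_queries_with_negation_general W Pplus Ps C h

end RDF
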